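/- In the SO(3) theory at q = e^{2πi/r} with r ≥ 5 odd, the matrix with entries μ_r·H(m,n) for m, n ∈ I_r = {0, 2, 4, …, r−3}, where μ_r = 2 sin(2π/r)/√r and H(m,n) = (−1)^{m+n}(q^{(m+1)(n+1)} − q^{−(m+1)(n+1)})/(q − q^{−1}), is a symmetric unitary matrix. -/

import Mathlib

open Real

/-- The kernel `H(m,n) = (-1)^{m+n} (q^{(m+1)(n+1)} - q^{-(m+1)(n+1)})/(q - q^{-1})` at
`q = e^{2πi/r}`. -/
noncomputable def Hker (r m n : ℕ) : ℂ :=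
  (-1 : ℂ) ^ (m + n) *
    ((Complex.exp (2 * (π : ℂ) * Complex.I / r)) ^ (((m : ℤ) + 1) * ((n : ℤ) + 1)) -
      (Complex.exp (2 * (π : ℂ) * Complex.I / r)) ^ (-(((m : ℤ) + 1) * ((n : ℤ) + 1)))) /
    (Complex.exp (2 * (π : ℂ) * Complex.I / r) - (Complex.exp (2 * (π : ℂ) * Complex.I / r))⁻¹)

/-!
With `q = e^{2πi/r}` and the quantum integer `[c] = (q^c - q^{-c})/(q - q^{-1})` we have
`H(m,n) = (-1)^{m+n} [(m+1)(n+1)]`, which is real because `conj q = q⁻¹`, and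
`μ_r² = -(q - q⁻¹)²/r`. The product-to-sum formula turns `μ_r² H(m,k) H(n,k)` into
`-(1/r) (S_{m+n+2}(k) - S_{m-n}(k))` with `S_e(k) = q^{e(k+1)} + q^{-e(k+1)}`. As `k` runs over
`I_r`, the exponents `±(k+1)` run over every nonzero residue mod `r` exactly once (`r` is odd), so
`∑_k S_e(k)` is a full geometric sum over the `r`-th roots of unity minus its `j = 0` term, namely
`r [r ∣ e] - 1`. Finally `r ∤ m+n+2` because it is even and lies in `(0, 2r)`, while `r ∣ m-n` only
for `m = n`.
-/

open Finset ComplexConjugate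

/-- For odd `r`, `k ↦ k + 1` and `k ↦ r - 1 - k` map the even `k < r - 2` onto the odd and the
even elements of `[1, r)` respectively. -/
theorem sum_Ico_one_eq_sum_filter_even {M : Type*} [AddCommMonoid M] {r : ℕ} (hr : Odd r)
    (g : ℕ → M) :
    ∑ j ∈ Ico 1 r, g j = ∑ k ∈ (range (r - 2)).filter Even, (g (k + 1) + g (r - 1 - k)) := by
  obtain ⟨s, rfl⟩ := hr
  rw [← sum_filter_add_sum_filter_not (Ico 1 (2 * s + 1)) Odd, sum_add_distrib]
  congr 1
  · refine sum_nbij' (· - 1) (· + 1) ?_ ?_ ?_ ?_ ?_ <;> intro j hj <;>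
      simp only [mem_filter, mem_Ico, mem_range, Nat.odd_iff, Nat.even_iff] at hj ⊢ <;>
      first | omega | (congr 1; omega)
  · refine sum_nbij' (2 * s - ·) (2 * s - ·) ?_ ?_ ?_ ?_ ?_ <;> intro j hj <;>
      simp only [mem_filter, mem_Ico, mem_range, Nat.odd_iff, Nat.even_iff] at hj ⊢ <;>
      first | omega | (congr 1; omega)

section Field

variable {K : Type*} [Field K]

def quantumInt (x : K) (c : ℤ) : K := (x ^ c - x ^ (-c)) / (x - x⁻¹)

theorem sub_inv_sq_mul_quantumInt_mul_quantumInt {x : K} (hx : x - x⁻¹ ≠ 0) (a b c : ℤ) :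
    (x - x⁻¹) ^ 2 * (quantumInt x (a * c) * quantumInt x (b * c)) =
      ((x ^ (a + b)) ^ c + (x ^ (a + b)) ^ (-c)) - ((x ^ (a - b)) ^ c + (x ^ (a - b)) ^ (-c)) := by
  have hx0 : x ≠ 0 := by rintro rfl; simp at hx
  have hadd : (x ^ (a + b)) ^ c = x ^ (a * c) * x ^ (b * c) := by
    rw [← zpow_mul, add_mul, zpow_add₀ hx0]
  have hsub : (x ^ (a - b)) ^ c = x ^ (a * c) / x ^ (b * c) := by
    rw [← zpow_mul, sub_mul, zpow_sub₀ hx0]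
  rw [quantumInt, quantumInt, div_mul_div_comm, ← sq, mul_div_cancel₀ _ (pow_ne_zero 2 hx)]
  simp only [zpow_neg, hadd, hsub]
  field_simp
  ring

theorem sum_filter_even_zpow_add_zpow_neg_of_pow_eq_one {r : ℕ} (hr : Odd r) {y : K}
    (hy : y ^ r = 1) :
    ∑ k ∈ (range (r - 2)).filter Even, (y ^ ((k : ℤ) + 1) + y ^ (-((k : ℤ) + 1))) =
      ∑ j ∈ range r, y ^ j - 1 := by
  have hpow : ∀ k : ℕ, y ^ ((k : ℤ) + 1) = y ^ (k + 1) := fun k => by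
    exact_mod_cast zpow_natCast y (k + 1)
  have hcompl : ∀ k ∈ (range (r - 2)).filter Even, y ^ (-((k : ℤ) + 1)) = y ^ (r - 1 - k) := by
    intro k hk
    simp only [mem_filter, mem_range] at hk
    rw [zpow_neg, hpow, inv_eq_iff_eq_inv, eq_comm, inv_eq_of_mul_eq_one_left]
    rw [← pow_add, show k + 1 + (r - 1 - k) = r by omega, hy]
  rw [sum_congr rfl fun k hk => by rw [hpow, hcompl k hk], ← sum_Ico_one_eq_sum_filter_even hr,
    sum_range_eq_add_Ico _ hr.pos, pow_zero, add_sub_cancel_left]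

theorem IsPrimitiveRoot.sum_filter_even_zpow_add_zpow_neg {r : ℕ} {ζ : K}
    (hζ : IsPrimitiveRoot ζ r) (hr : Odd r) (e : ℤ) :
    ∑ k ∈ (range (r - 2)).filter Even, ((ζ ^ e) ^ ((k : ℤ) + 1) + (ζ ^ e) ^ (-((k : ℤ) + 1))) =
      (if (r : ℤ) ∣ e then (r : K) else 0) - 1 := by
  have hζe : (ζ ^ e) ^ r = 1 := by
    rw [← zpow_natCast, ← zpow_mul, mul_comm, zpow_mul, zpow_natCast, hζ.pow_eq_one, one_zpow]
  rw [sum_filter_even_zpow_add_zpow_neg_of_pow_eq_one hr hζe]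
  split_ifs with hdvd
  · simp [(hζ.zpow_eq_one_iff_dvd e).mpr hdvd]
  · rw [geom_sum_eq (mt (hζ.zpow_eq_one_iff_dvd e).mp hdvd), hζe, sub_self, zero_div]

end Field

theorem conj_quantumInt {x : ℂ} (hx : conj x = x⁻¹) (c : ℤ) :
    conj (quantumInt x c) = quantumInt x c := by
  rw [quantumInt, map_div₀, map_sub, map_sub, map_zpow₀, map_zpow₀, map_inv₀, hx, inv_inv,
    inv_zpow', inv_zpow', neg_neg, ← neg_sub x, ← neg_sub (x ^ c), neg_div_neg_eq]

noncomputable def qRoot (r : ℕ) : ℂ := Complex.exp (2 * π * Complex.I / r)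

theorem Hker_eq (r m n : ℕ) :
    Hker r m n = (-1) ^ (m + n) * quantumInt (qRoot r) (((m : ℤ) + 1) * ((n : ℤ) + 1)) :=
  mul_div_assoc _ _ _

theorem conj_qRoot (r : ℕ) : conj (qRoot r) = (qRoot r)⁻¹ := by
  rw [qRoot, ← Complex.exp_conj, ← Complex.exp_neg]
  congr 1
  simp only [map_div₀, map_mul, map_ofNat, Complex.conj_ofReal, Complex.conj_I, map_natCast]
  ring

theorem conj_Hker (r m n : ℕ) : conj (Hker r m n) = Hker r m n := by
  rw [Hker_eq, map_mul, map_pow, map_neg, map_one, conj_quantumInt (conj_qRoot r)]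

theorem qRoot_sub_inv (r : ℕ) :
    qRoot r - (qRoot r)⁻¹ = 2 * (Real.sin (2 * π / r) : ℂ) * Complex.I := by
  have hθ : 2 * (π : ℂ) * Complex.I / r = ((2 * π / r : ℝ) : ℂ) * Complex.I := by
    push_cast; ring
  rw [qRoot, hθ, ← Complex.exp_neg, ← neg_mul, Complex.exp_mul_I, Complex.exp_mul_I,
    Complex.cos_neg, Complex.sin_neg, ← Complex.ofReal_sin]
  ring

theorem sq_mu (r : ℕ) :
    ((2 * Real.sin (2 * π / r) / √r : ℝ) : ℂ) ^ 2 = -(qRoot r - (qRoot r)⁻¹) ^ 2 / r := by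
  have hsqrt : ((√r : ℝ) : ℂ) ^ 2 = r := by
    rw [← Complex.ofReal_pow, Real.sq_sqrt (Nat.cast_nonneg r), Complex.ofReal_natCast]
  rw [qRoot_sub_inv, Complex.ofReal_div, div_pow, hsqrt, Complex.ofReal_mul, Complex.ofReal_ofNat]
  linear_combination (4 * (Real.sin (2 * π / r) : ℂ) ^ 2 / r) * Complex.I_sq

theorem qRoot_sub_inv_ne_zero {r : ℕ} (hr : 2 < r) : qRoot r - (qRoot r)⁻¹ ≠ 0 := by
  have hζ : IsPrimitiveRoot (qRoot r) r := Complex.isPrimitiveRoot_exp r (by omega)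
  intro h
  have hsq : qRoot r ^ 2 = 1 := by
    have h0 : qRoot r ≠ 0 := Complex.exp_ne_zero _
    field_simp at h
    linear_combination h
  have := Nat.le_of_dvd two_pos (hζ.pow_eq_one_iff_dvd 2 |>.mp hsq)
  omega

theorem sq_mu_mul_Hker_mul_conj_Hker {r : ℕ} (hr : 2 < r) (m n k : ℕ) :
    ((2 * Real.sin (2 * π / r) / √r : ℝ) : ℂ) ^ 2 * Hker r m k * conj (Hker r n k) =
      (-1) ^ (m + n) * (-1 / r) *
        (((qRoot r ^ (((m : ℤ) + 1) + ((n : ℤ) + 1))) ^ ((k : ℤ) + 1) +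
            (qRoot r ^ (((m : ℤ) + 1) + ((n : ℤ) + 1))) ^ (-((k : ℤ) + 1))) -
          ((qRoot r ^ (((m : ℤ) + 1) - ((n : ℤ) + 1))) ^ ((k : ℤ) + 1) +
            (qRoot r ^ (((m : ℤ) + 1) - ((n : ℤ) + 1))) ^ (-((k : ℤ) + 1)))) := by
  have hsign : ((-1 : ℂ)) ^ (m + k) * (-1) ^ (n + k) = (-1) ^ (m + n) := by
    rw [← pow_add, show m + k + (n + k) = m + n + 2 * k by ring, pow_add, pow_mul, neg_one_sq,
      one_pow, mul_one]
  rw [conj_Hker, Hker_eq, Hker_eq, sq_mu,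
    ← sub_inv_sq_mul_quantumInt_mul_quantumInt (qRoot_sub_inv_ne_zero hr)]
  linear_combination (-(qRoot r - (qRoot r)⁻¹) ^ 2 / r *
    quantumInt (qRoot r) (((m : ℤ) + 1) * ((k : ℤ) + 1)) *
    quantumInt (qRoot r) (((n : ℤ) + 1) * ((k : ℤ) + 1))) * hsign

/-- In the `SO(3)` theory at `q = e^{2πi/r}`, the matrix `(μ_r H(m,n))_{m,n ∈ I_r}`,
`I_r = {0,2,…,r-3}`, `μ_r = 2 sin(2π/r)/√r`, is symmetric and unitary. -/
theorem Hker_symmetric_unitary (r : ℕ) (hr : Odd r) (hr5 : 5 ≤ r) :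
    (∀ m n : ℕ, Hker r m n = Hker r n m) ∧
    (∀ m ∈ (Finset.range (r - 2)).filter (fun a => Even a),
      ∀ n ∈ (Finset.range (r - 2)).filter (fun a => Even a),
        ∑ k ∈ (Finset.range (r - 2)).filter (fun a => Even a),
          ((2 * Real.sin (2 * π / r) / Real.sqrt r : ℝ) : ℂ) ^ 2 *
            Hker r m k * (starRingEnd ℂ) (Hker r n k) = if m = n then 1 else 0) := by
  refine ⟨fun m n => by rw [Hker, Hker, add_comm m n, mul_comm ((m : ℤ) + 1)], ?_⟩
  intro m hm n hn
  simp only [mem_filter, mem_range] at hm hn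
  have hζ : IsPrimitiveRoot (qRoot r) r := Complex.isPrimitiveRoot_exp r (by omega)
  have hsum : ¬ (r : ℤ) ∣ ((m : ℤ) + 1) + ((n : ℤ) + 1) := by
    intro h
    have hr_eq := Int.eq_zero_of_abs_lt_dvd (h.sub (dvd_refl _)) (by rw [abs_lt]; omega)
    obtain ⟨a, rfl⟩ := hm.2
    obtain ⟨b, rfl⟩ := hn.2
    obtain ⟨c, rfl⟩ := hr
    omega
  have hdiff : (r : ℤ) ∣ ((m : ℤ) + 1) - ((n : ℤ) + 1) ↔ m = n := by
    refine ⟨fun h => ?_, fun h => by simp [h]⟩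
    have hm_eq := Int.eq_zero_of_abs_lt_dvd h (by rw [abs_lt]; omega)
    omega
  rw [sum_congr rfl fun k _ => sq_mu_mul_Hker_mul_conj_Hker (by omega) m n k, ← mul_sum,
    sum_sub_distrib, hζ.sum_filter_even_zpow_add_zpow_neg hr,
    hζ.sum_filter_even_zpow_add_zpow_neg hr, if_neg hsum, (hm.2.add hn.2).neg_one_pow]
  have hr0 : (r : ℂ) ≠ 0 := Nat.cast_ne_zero.mpr (by omega)
  by_cases h : m = n
  · simp only [if_pos (hdiff.mpr h), if_pos h]
    field_simp
    ring
  · simp only [if_neg (mt hdiff.mp h), if_neg h]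
    ring
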